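/- (Trace-merging identity in the proof of the CHN identities.) For all integers j ≥ 2 and 1 ≤ k ≤ j−1 one has the matrix identity over the RTT-algebra: σ_k(T) · T^{⟨j−k⟩} = q^k · Tr_{(1…j−1)}(A^{(k)} R̂_{k+1} R̂_{k+2} … R̂_{j−1} T₁ T₂ … T_j), where A^{(k)} acts in the first k tensor factors of V^{⊗j}. -/
import Mathlib


open Finset

/-- Operators on `V^{⊗ m}` where `V = F^N`, represented as matrices indexed by
multi-indices `Fin m → Fin N`. -/
abbrev TensM (R : Type*) (N m : ℕ) := Matrix (Fin m → Fin N) (Fin m → Fin N) R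

/-- Operators on `V ⊗ V`, i.e. `N² × N²` matrices. -/
abbrev RMat (R : Type*) (N : ℕ) := Matrix (Fin N × Fin N) (Fin N × Fin N) R

/-- The `q`-number `k_q = (q^k - q^{-k})/(q - q^{-1})`. -/
noncomputable def qnum {F : Type*} [Field F] (q : F) (k : ℕ) : F :=
  (q ^ k - q⁻¹ ^ k) / (q - q⁻¹)

/-- Place an `N × N` matrix on the tensor leg number `i` (0-based) of `V^{⊗ m}`,
acting as the identity on all other legs. -/
def place1 {R : Type*} [Zero R] {N m : ℕ} (i : ℕ) (M : Matrix (Fin N) (Fin N) R) :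
    TensM R N m :=
  Matrix.of fun a b =>
    if h : i < m then
      if ∀ t : Fin m, t.val ≠ i → a t = b t then M (a ⟨i, h⟩) (b ⟨i, h⟩) else 0
    else 0

/-- Place an operator on `V ⊗ V` on the (0-based) tensor legs `i, i+1` of `V^{⊗ m}`,
acting as the identity on all other legs.  (So the paper's `R̂_i`, `1`-based, is
`place2 (i-1)`.) -/
def place2 {R : Type*} [Zero R] {N m : ℕ} (i : ℕ) (M : RMat R N) :
    TensM R N m :=
  Matrix.of fun a b =>
    if h : i + 1 < m then
      if ∀ t : Fin m, t.val ≠ i → t.val ≠ i + 1 → a t = b t then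
        M (a ⟨i, by omega⟩, a ⟨i + 1, h⟩) (b ⟨i, by omega⟩, b ⟨i + 1, h⟩)
      else 0
    else 0

/-- Embed an operator on `V^{⊗ k}` into `V^{⊗ m}` (`k ≤ m`), acting on the first `k`
tensor legs and as the identity on the remaining legs. -/
def embed {R : Type*} [Zero R] {N : ℕ} (m : ℕ) {k : ℕ} (M : TensM R N k) :
    TensM R N m :=
  Matrix.of fun a b =>
    if h : k ≤ m then
      if ∀ t : Fin m, k ≤ t.val → a t = b t then
        M (fun s => a ⟨s.val, lt_of_lt_of_le s.isLt h⟩)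
          (fun s => b ⟨s.val, lt_of_lt_of_le s.isLt h⟩)
      else 0
    else 0

/-- The braid form of the Yang--Baxter equation `R̂₁ R̂₂ R̂₁ = R̂₂ R̂₁ R̂₂` on `V^{⊗3}`. -/
def YangBaxter {F : Type*} [Field F] {N : ℕ} (Rh : RMat F N) : Prop :=
  (place2 0 Rh : TensM F N 3) * place2 1 Rh * place2 0 Rh =
    place2 1 Rh * place2 0 Rh * place2 1 Rh

/-- The Hecke condition `R̂² = I + (q - q⁻¹) R̂`. -/
def Hecke {F : Type*} [Field F] {N : ℕ} (q : F) (Rh : RMat F N) : Prop :=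
  Rh * Rh = 1 + (q - q⁻¹) • Rh

/-- The `q`-antisymmetrizers `A^{(k)}`, defined inductively by `A^{(1)} = I` and
`A^{(k)} = (1/k_q) A^{(k-1)} (q^{k-1} - (k-1)_q R̂_{k-1}) A^{(k-1)}`. -/
noncomputable def antis {F : Type*} [Field F] {N : ℕ} (Rh : RMat F N) (q : F) :
    (k : ℕ) → TensM F N k
  | 0 => 1
  | 1 => 1
  | k + 2 =>
      (qnum q (k + 2))⁻¹ •
        (embed (k + 2) (antis Rh q (k + 1)) *
          (q ^ (k + 1) • (1 : TensM F N (k + 2)) - qnum q (k + 1) • place2 k Rh) *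
          embed (k + 2) (antis Rh q (k + 1)))

/-- The `q`-symmetrizers `S^{(k)}`, defined inductively by `S^{(1)} = I` and
`S^{(k)} = (1/k_q) S^{(k-1)} (q^{1-k} + (k-1)_q R̂_{k-1}) S^{(k-1)}`. -/
noncomputable def syms {F : Type*} [Field F] {N : ℕ} (Rh : RMat F N) (q : F) :
    (k : ℕ) → TensM F N k
  | 0 => 1
  | 1 => 1
  | k + 2 =>
      (qnum q (k + 2))⁻¹ •
        (embed (k + 2) (syms Rh q (k + 1)) *
          (q⁻¹ ^ (k + 1) • (1 : TensM F N (k + 2)) + qnum q (k + 1) • place2 k Rh) *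
          embed (k + 2) (syms Rh q (k + 1)))

/-- Partial trace over all tensor legs except the last one. -/
def trAllButLast {R : Type*} [AddCommMonoid R] {N : ℕ} :
    {m : ℕ} → TensM R N m → Matrix (Fin N) (Fin N) R
  | 0, _ => 0
  | m + 1, M => Matrix.of fun x y => ∑ a : Fin m → Fin N, M (Fin.snoc a x) (Fin.snoc a y)

/-- Partial trace over all tensor legs except the first one. -/
def trAllButFirst {R : Type*} [AddCommMonoid R] {N : ℕ} :
    {m : ℕ} → TensM R N m → Matrix (Fin N) (Fin N) R
  | 0, _ => 0
  | m + 1, M => Matrix.of fun x y => ∑ a : Fin m → Fin N, M (Fin.cons x a) (Fin.cons y a)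

/-- Extension of scalars `F → 𝒜` applied entrywise (scalar entries are central in `𝒜`). -/
def lift {F : Type*} [Field F] (𝒜 : Type*) [Ring 𝒜] [Algebra F 𝒜] {N m : ℕ}
    (M : TensM F N m) : TensM 𝒜 N m := M.map (algebraMap F 𝒜)

/-- The product `R̂_{i+1} R̂_{i+2} ⋯ R̂_{i+l}` (1-based paper numbering), i.e. the product of
copies of `R̂` placed at 0-based positions `i, i+1, …, i+l-1` of `V^{⊗ m}`. -/
noncomputable def rChainFrom {F : Type*} [Field F] {N : ℕ} (m : ℕ) (Rh : RMat F N)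
    (i : ℕ) : ℕ → TensM F N m
  | 0 => 1
  | l + 1 => rChainFrom m Rh i l * place2 (i + l) Rh

/-- The product `R̂₁ R̂₂ ⋯ R̂_l` (1-based paper numbering) on `V^{⊗ m}`. -/
noncomputable def rChain {F : Type*} [Field F] {N : ℕ} (m : ℕ) (Rh : RMat F N)
    (l : ℕ) : TensM F N m := rChainFrom m Rh 0 l

/-- The product `T₁ T₂ ⋯ T_k` of copies of the quantum matrix `T` on `V^{⊗ m}`. -/
def Tprod {𝒜 : Type*} [Ring 𝒜] {N : ℕ} (m : ℕ) (T : Matrix (Fin N) (Fin N) 𝒜) :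
    ℕ → TensM 𝒜 N m
  | 0 => 1
  | k + 1 => Tprod m T k * place1 k T

/-- The matrix `T₁T₂` on `V ⊗ V`, `(T₁T₂)^{ij}_{kl} = T^i_k T^j_l`. -/
def TT {𝒜 : Type*} [Mul 𝒜] {N : ℕ} (T : Matrix (Fin N) (Fin N) 𝒜) : RMat 𝒜 N :=
  Matrix.of fun p r => T p.1 r.1 * T p.2 r.2

/-- The RTT relation `R̂ T₁T₂ = T₁T₂ R̂` (entries of `R̂` are central scalars). -/
def RTTrel {F : Type*} [Field F] {N : ℕ} (𝒜 : Type*) [Ring 𝒜] [Algebra F 𝒜]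
    (Rh : RMat F N) (T : Matrix (Fin N) (Fin N) 𝒜) : Prop :=
  Rh.map (algebraMap F 𝒜) * TT T = TT T * Rh.map (algebraMap F 𝒜)

/-- The `k`-th underlined power `T^{⟨k⟩} = Tr_{(1…k-1)} (R̂₁ ⋯ R̂_{k-1} T₁ ⋯ T_k)`. -/
noncomputable def underPow {F : Type*} [Field F] (𝒜 : Type*) [Ring 𝒜] [Algebra F 𝒜]
    {N : ℕ} (Rh : RMat F N) (T : Matrix (Fin N) (Fin N) 𝒜) :
    ℕ → Matrix (Fin N) (Fin N) 𝒜
  | 0 => 1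
  | k + 1 => trAllButLast (lift 𝒜 (rChain (k + 1) Rh k) * Tprod (k + 1) T (k + 1))

/-- The `k`-th overlined power `T^{[k]} = Tr_{(2…k)} (R̂₁ ⋯ R̂_{k-1} T₁ ⋯ T_k)`. -/
noncomputable def overPow {F : Type*} [Field F] (𝒜 : Type*) [Ring 𝒜] [Algebra F 𝒜]
    {N : ℕ} (Rh : RMat F N) (T : Matrix (Fin N) (Fin N) 𝒜) :
    ℕ → Matrix (Fin N) (Fin N) 𝒜
  | 0 => 1
  | k + 1 => trAllButFirst (lift 𝒜 (rChain (k + 1) Rh k) * Tprod (k + 1) T (k + 1))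

/-- The `k`-th right wedge power `T^{∧k,r} = Tr_{(1…k-1)} (A^{(k)} T₁ ⋯ T_k)`. -/
noncomputable def wedgeR {F : Type*} [Field F] (𝒜 : Type*) [Ring 𝒜] [Algebra F 𝒜]
    {N : ℕ} (Rh : RMat F N) (q : F) (T : Matrix (Fin N) (Fin N) 𝒜) :
    ℕ → Matrix (Fin N) (Fin N) 𝒜
  | 0 => 1
  | k + 1 => trAllButLast (lift 𝒜 (antis Rh q (k + 1)) * Tprod (k + 1) T (k + 1))

/-- The `k`-th left wedge power `T^{∧k,l} = Tr_{(2…k)} (A^{(k)} T₁ ⋯ T_k)`. -/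
noncomputable def wedgeL {F : Type*} [Field F] (𝒜 : Type*) [Ring 𝒜] [Algebra F 𝒜]
    {N : ℕ} (Rh : RMat F N) (q : F) (T : Matrix (Fin N) (Fin N) 𝒜) :
    ℕ → Matrix (Fin N) (Fin N) 𝒜
  | 0 => 1
  | k + 1 => trAllButFirst (lift 𝒜 (antis Rh q (k + 1)) * Tprod (k + 1) T (k + 1))

/-- The `k`-th right symmetric power `T^{Sk,r} = Tr_{(1…k-1)} (S^{(k)} T₁ ⋯ T_k)`. -/
noncomputable def sPowR {F : Type*} [Field F] (𝒜 : Type*) [Ring 𝒜] [Algebra F 𝒜]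
    {N : ℕ} (Rh : RMat F N) (q : F) (T : Matrix (Fin N) (Fin N) 𝒜) :
    ℕ → Matrix (Fin N) (Fin N) 𝒜
  | 0 => 1
  | k + 1 => trAllButLast (lift 𝒜 (syms Rh q (k + 1)) * Tprod (k + 1) T (k + 1))

/-- The `k`-th left symmetric power `T^{Sk,l} = Tr_{(2…k)} (S^{(k)} T₁ ⋯ T_k)`. -/
noncomputable def sPowL {F : Type*} [Field F] (𝒜 : Type*) [Ring 𝒜] [Algebra F 𝒜]
    {N : ℕ} (Rh : RMat F N) (q : F) (T : Matrix (Fin N) (Fin N) 𝒜) :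
    ℕ → Matrix (Fin N) (Fin N) 𝒜
  | 0 => 1
  | k + 1 => trAllButFirst (lift 𝒜 (syms Rh q (k + 1)) * Tprod (k + 1) T (k + 1))

/-- The elementary symmetric functions `σ_k(T) = q^k Tr_{(1…k)} (A^{(k)} T₁ ⋯ T_k)`
(with `σ₀(T) = 1`). -/
noncomputable def sigmaT {F : Type*} [Field F] (𝒜 : Type*) [Ring 𝒜] [Algebra F 𝒜]
    {N : ℕ} (Rh : RMat F N) (q : F) (T : Matrix (Fin N) (Fin N) 𝒜) (k : ℕ) : 𝒜 :=
  q ^ k • Matrix.trace (lift 𝒜 (antis Rh q k) * Tprod k T k)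

/-- The complete symmetric functions `τ_k(T) = q^{-k} Tr_{(1…k)} (S^{(k)} T₁ ⋯ T_k)`
(with `τ₀(T) = 1`). -/
noncomputable def tauT {F : Type*} [Field F] (𝒜 : Type*) [Ring 𝒜] [Algebra F 𝒜]
    {N : ℕ} (Rh : RMat F N) (q : F) (T : Matrix (Fin N) (Fin N) 𝒜) (k : ℕ) : 𝒜 :=
  q⁻¹ ^ k • Matrix.trace (lift 𝒜 (syms Rh q k) * Tprod k T k)

/-- The `q`-power sums `s_k(T) = Tr_{(1…k)} (R̂₁ ⋯ R̂_{k-1} T₁ ⋯ T_k)` (with `s₀(T) = 1`). -/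
noncomputable def psum {F : Type*} [Field F] (𝒜 : Type*) [Ring 𝒜] [Algebra F 𝒜]
    {N : ℕ} (Rh : RMat F N) (T : Matrix (Fin N) (Fin N) 𝒜) (k : ℕ) : 𝒜 :=
  Matrix.trace (lift 𝒜 (rChain k Rh (k - 1)) * Tprod k T k)

/-- `D_ℓ = (n_q / q^n) Tr_{(1…n-1)} A^{(n)}`. -/
noncomputable def Dleft {F : Type*} [Field F] {N : ℕ} (Rh : RMat F N) (q : F) (n : ℕ) :
    Matrix (Fin N) (Fin N) F :=
  (qnum q n / q ^ n) • trAllButLast (antis Rh q n)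

/-- `D_r = (n_q / q^n) Tr_{(2…n)} A^{(n)}`. -/
noncomputable def Dright {F : Type*} [Field F] {N : ℕ} (Rh : RMat F N) (q : F) (n : ℕ) :
    Matrix (Fin N) (Fin N) F :=
  (qnum q n / q ^ n) • trAllButFirst (antis Rh q n)

/-- The Reflection equation `R̂ L₁ R̂ L₁ = L₁ R̂ L₁ R̂` on `V ⊗ V`. -/
def RErel {F : Type*} [Field F] {N : ℕ} (𝒜 : Type*) [Ring 𝒜] [Algebra F 𝒜]
    (Rh : RMat F N) (L : Matrix (Fin N) (Fin N) 𝒜) : Prop :=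
  lift 𝒜 (place2 0 Rh : TensM F N 2) * place1 0 L * lift 𝒜 (place2 0 Rh) * place1 0 L =
    place1 0 L * lift 𝒜 (place2 0 Rh) * place1 0 L * lift 𝒜 (place2 0 Rh)

/-- `L_{k̄}` (0-based: `Lbar … 0 = L₁`, `Lbar … k = R̂_k (Lbar … (k-1)) R̂_k⁻¹`). -/
noncomputable def Lbar {F : Type*} [Field F] (𝒜 : Type*) [Ring 𝒜] [Algebra F 𝒜]
    {N : ℕ} (Rh : RMat F N) (m : ℕ) (L : Matrix (Fin N) (Fin N) 𝒜) :
    ℕ → TensM 𝒜 N m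
  | 0 => place1 0 L
  | k + 1 => lift 𝒜 (place2 k Rh) * Lbar 𝒜 Rh m L k * lift 𝒜 (place2 k Rh⁻¹)

/-- The product `L_{1̄} L_{2̄} ⋯ L_{k̄}` on `V^{⊗ m}`. -/
noncomputable def LbarProd {F : Type*} [Field F] (𝒜 : Type*) [Ring 𝒜] [Algebra F 𝒜]
    {N : ℕ} (Rh : RMat F N) (m : ℕ) (L : Matrix (Fin N) (Fin N) 𝒜) :
    ℕ → TensM 𝒜 N m
  | 0 => 1
  | k + 1 => LbarProd 𝒜 Rh m L k * Lbar 𝒜 Rh m L k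

/-- Insertion of a copy of `D` on every tensor leg of `V^{⊗(m+1)}` except the first one. -/
def Dbig {F : Type*} [Field F] {N : ℕ} (D : Matrix (Fin N) (Fin N) F) (m : ℕ) :
    TensM F N (m + 1) :=
  Matrix.of fun a b =>
    (if a 0 = b 0 then (1 : F) else 0) * ∏ t : Fin m, D (a t.succ) (b t.succ)

/-- `L^{∧k} = Tr_{q (2…k)} (A^{(k)} L_{1̄} ⋯ L_{k̄})`, the `q`-trace over the legs `2…k`,
with a copy of `D` inserted in each traced leg. -/
noncomputable def LwedgeRE {F : Type*} [Field F] (𝒜 : Type*) [Ring 𝒜] [Algebra F 𝒜]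
    {N : ℕ} (Rh : RMat F N) (q : F) (D : Matrix (Fin N) (Fin N) F)
    (L : Matrix (Fin N) (Fin N) 𝒜) : ℕ → Matrix (Fin N) (Fin N) 𝒜
  | 0 => 1
  | k + 1 => trAllButFirst
      (lift 𝒜 (antis Rh q (k + 1)) * LbarProd 𝒜 Rh (k + 1) L (k + 1) * lift 𝒜 (Dbig D k))

/-- `L^{Sk} = Tr_{q (2…k)} (S^{(k)} L_{1̄} ⋯ L_{k̄})`. -/
noncomputable def LsymRE {F : Type*} [Field F] (𝒜 : Type*) [Ring 𝒜] [Algebra F 𝒜]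
    {N : ℕ} (Rh : RMat F N) (q : F) (D : Matrix (Fin N) (Fin N) F)
    (L : Matrix (Fin N) (Fin N) 𝒜) : ℕ → Matrix (Fin N) (Fin N) 𝒜
  | 0 => 1
  | k + 1 => trAllButFirst
      (lift 𝒜 (syms Rh q (k + 1)) * LbarProd 𝒜 Rh (k + 1) L (k + 1) * lift 𝒜 (Dbig D k))

/-- `σ_k(L) = q^k Tr_q (L^{∧k})`, with `σ₀(L) = 1`;  `Tr_q X = Tr (D_r X)`. -/
noncomputable def sigmaRE {F : Type*} [Field F] (𝒜 : Type*) [Ring 𝒜] [Algebra F 𝒜]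
    {N : ℕ} (Rh : RMat F N) (q : F) (D : Matrix (Fin N) (Fin N) F)
    (L : Matrix (Fin N) (Fin N) 𝒜) : ℕ → 𝒜
  | 0 => 1
  | k + 1 => q ^ (k + 1) •
      Matrix.trace (D.map (algebraMap F 𝒜) * LwedgeRE 𝒜 Rh q D L (k + 1))

/-- `τ_k(L) = q^{-k} Tr_q (L^{Sk})`, with `τ₀(L) = 1`. -/
noncomputable def tauRE {F : Type*} [Field F] (𝒜 : Type*) [Ring 𝒜] [Algebra F 𝒜]
    {N : ℕ} (Rh : RMat F N) (q : F) (D : Matrix (Fin N) (Fin N) F)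
    (L : Matrix (Fin N) (Fin N) 𝒜) : ℕ → 𝒜
  | 0 => 1
  | k + 1 => q⁻¹ ^ (k + 1) •
      Matrix.trace (D.map (algebraMap F 𝒜) * LsymRE 𝒜 Rh q D L (k + 1))

section CHNaux

variable {R : Type*} {N k l : ℕ}

/-- Restriction of a multi-index to the first `k` legs. -/
def restL (a : Fin (k + l) → Fin N) : Fin k → Fin N :=
  fun s => a ⟨s.val, by omega⟩

/-- Restriction of a multi-index to the last `l` legs. -/
def restR (a : Fin (k + l) → Fin N) : Fin l → Fin N :=
  fun s => a ⟨k + s.val, by omega⟩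

/-- Concatenation of multi-indices. -/
def app (f : Fin k → Fin N) (g : Fin l → Fin N) : Fin (k + l) → Fin N :=
  fun t => if h : t.val < k then f ⟨t.val, h⟩ else g ⟨t.val - k, by omega⟩

@[simp] lemma restL_app (f : Fin k → Fin N) (g : Fin l → Fin N) : restL (app f g) = f := by
  funext s
  simp [restL, app, s.isLt]

@[simp] lemma restR_app (f : Fin k → Fin N) (g : Fin l → Fin N) : restR (app f g) = g := by
  funext s
  simp only [restR, app]
  rw [dif_neg (by omega)]
  exact congrArg g (Fin.ext (show k + s.val - k = s.val by omega))

@[simp] lemma app_restL_restR (a : Fin (k + l) → Fin N) : app (restL a) (restR a) = a := by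
  funext t
  by_cases h : t.val < k
  · simp only [app, restL, dif_pos h]
  · simp only [app, restR, dif_neg h]
    exact congrArg a (Fin.ext (show k + (t.val - k) = t.val by omega))

lemma eq_iff_rest (a b : Fin (k + l) → Fin N) :
    a = b ↔ restL a = restL b ∧ restR a = restR b := by
  constructor
  · rintro rfl; exact ⟨rfl, rfl⟩
  · rintro ⟨h1, h2⟩
    rw [← app_restL_restR a, ← app_restL_restR b, h1, h2]

/-- The splitting equivalence of multi-index spaces. -/
def splitEquiv (N k l : ℕ) : ((Fin k → Fin N) × (Fin l → Fin N)) ≃ (Fin (k + l) → Fin N) where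
  toFun p := app p.1 p.2
  invFun a := (restL a, restR a)
  left_inv p := by simp
  right_inv a := app_restL_restR a

lemma sum_split {M : Type*} [AddCommMonoid M] (φ : (Fin (k + l) → Fin N) → M) :
    ∑ c, φ c = ∑ c₁ : Fin k → Fin N, ∑ c₂ : Fin l → Fin N, φ (app c₁ c₂) := by
  rw [← Equiv.sum_comp (splitEquiv N k l) φ, Fintype.sum_prod_type]
  rfl

/-- Tensor (Kronecker) product of operators on the first `k` and last `l` legs. -/
def kron [Mul R] (X : TensM R N k) (Y : TensM R N l) : TensM R N (k + l) :=
  Matrix.of fun a b => X (restL a) (restL b) * Y (restR a) (restR b)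

/-- Place an operator on the last `l` legs of `V^{⊗(k+l)}`. -/
def shiftMat [Zero R] (Y : TensM R N l) : TensM R N (k + l) :=
  Matrix.of fun a b => if restL a = restL b then Y (restR a) (restR b) else 0

lemma embed_apply [Zero R] (X : TensM R N k) (a b : Fin (k + l) → Fin N) :
    embed (k + l) X a b = if restR a = restR b then X (restL a) (restL b) else 0 := by
  show (if h : k ≤ k + l then _ else _) = _
  rw [dif_pos (Nat.le_add_right k l)]
  by_cases h : restR a = restR b
  · rw [if_pos h]
    have hc : ∀ t : Fin (k + l), k ≤ t.val → a t = b t := by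
      intro t ht
      have h2 := congrFun h ⟨t.val - k, by omega⟩
      have h3 : (⟨k + (t.val - k), by omega⟩ : Fin (k + l)) = t :=
        Fin.ext (show k + (t.val - k) = t.val by omega)
      simpa only [restR, h3] using h2
    rw [if_pos hc]
    rfl
  · rw [if_neg h, if_neg]
    intro hc
    exact h (funext fun s => hc ⟨k + s.val, by omega⟩ (show k ≤ k + s.val by omega))

lemma shiftMat_apply [Zero R] (Y : TensM R N l) (a b : Fin (k + l) → Fin N) :
    (shiftMat Y : TensM R N (k + l)) a b =
      if restL a = restL b then Y (restR a) (restR b) else 0 := rfl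

lemma embed_one [MulZeroOneClass R] :
    (embed (k + l) (1 : TensM R N k)) = (1 : TensM R N (k + l)) := by
  ext a b
  rw [embed_apply, Matrix.one_apply]
  by_cases h1 : restL a = restL b <;> by_cases h2 : restR a = restR b <;>
    simp [Matrix.one_apply, h1, h2, eq_iff_rest a b]

lemma shiftMat_one [MulZeroOneClass R] :
    (shiftMat (1 : TensM R N l)) = (1 : TensM R N (k + l)) := by
  ext a b
  rw [shiftMat_apply, Matrix.one_apply]
  by_cases h1 : restL a = restL b <;> by_cases h2 : restR a = restR b <;>
    simp [Matrix.one_apply, h1, h2, eq_iff_rest a b]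

lemma embed_mul_embed [NonUnitalNonAssocSemiring R] (X Z : TensM R N k) :
    (embed (k + l) X) * (embed (k + l) Z) = embed (k + l) (X * Z) := by
  ext a b
  rw [Matrix.mul_apply, sum_split]
  simp only [embed_apply, restL_app, restR_app]
  have h1 : ∀ c₁ : Fin k → Fin N,
      (∑ c₂ : Fin l → Fin N, (if restR a = c₂ then X (restL a) c₁ else 0) *
        (if c₂ = restR b then Z c₁ (restL b) else 0)) =
      if restR a = restR b then X (restL a) c₁ * Z c₁ (restL b) else 0 := by
    intro c₁
    rw [Finset.sum_eq_single (restR a)]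
    · by_cases h : restR a = restR b <;> simp [h]
    · intro c₂ _ hne
      simp [Ne.symm hne]
    · simp
  simp only [h1]
  by_cases h : restR a = restR b <;> simp [h, Matrix.mul_apply]

lemma shiftMat_mul_shiftMat [NonUnitalNonAssocSemiring R] (X Z : TensM R N l) :
    (shiftMat X : TensM R N (k + l)) * (shiftMat Z) = shiftMat (X * Z) := by
  ext a b
  rw [Matrix.mul_apply, sum_split]
  simp only [shiftMat_apply, restL_app, restR_app]
  have h1 : ∀ c₂ : Fin l → Fin N,
      (∑ c₁ : Fin k → Fin N, (if restL a = c₁ then X (restR a) c₂ else 0) *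
        (if c₁ = restL b then Z c₂ (restR b) else 0)) =
      if restL a = restL b then X (restR a) c₂ * Z c₂ (restR b) else 0 := by
    intro c₂
    rw [Finset.sum_eq_single (restL a)]
    · by_cases h : restL a = restL b <;> simp [h]
    · intro c₁ _ hne
      simp [Ne.symm hne]
    · simp
  rw [Finset.sum_comm]
  simp only [h1]
  by_cases h : restL a = restL b <;> simp [h, Matrix.mul_apply]

lemma embed_mul_shiftMat [NonUnitalNonAssocSemiring R] (X : TensM R N k) (Y : TensM R N l) :
    (embed (k + l) X) * (shiftMat Y) = kron X Y := by
  ext a b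
  rw [Matrix.mul_apply, sum_split]
  simp only [embed_apply, shiftMat_apply, restL_app, restR_app]
  have h1 : ∀ c₁ : Fin k → Fin N,
      (∑ c₂ : Fin l → Fin N, (if restR a = c₂ then X (restL a) c₁ else 0) *
        (if c₁ = restL b then Y c₂ (restR b) else 0)) =
      if c₁ = restL b then X (restL a) c₁ * Y (restR a) (restR b) else 0 := by
    intro c₁
    rw [Finset.sum_eq_single (restR a)]
    · by_cases h : c₁ = restL b <;> simp [h]
    · intro c₂ _ hne
      simp [Ne.symm hne]
    · simp
  simp only [h1]
  rw [Finset.sum_eq_single (restL b)]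
  · simp [kron]
  · intro c₁ _ hne
    simp [hne]
  · simp

lemma shiftMat_mul_embed [NonUnitalNonAssocSemiring R] (Y : TensM R N l) (X : TensM R N k) :
    (shiftMat Y : TensM R N (k + l)) * (embed (k + l) X) =
      Matrix.of fun a b => Y (restR a) (restR b) * X (restL a) (restL b) := by
  ext a b
  rw [Matrix.mul_apply, sum_split]
  simp only [shiftMat_apply, embed_apply, restL_app, restR_app]
  have h1 : ∀ c₁ : Fin k → Fin N,
      (∑ c₂ : Fin l → Fin N, (if restL a = c₁ then Y (restR a) c₂ else 0) *
        (if c₂ = restR b then X c₁ (restL b) else 0)) =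
      if restL a = c₁ then Y (restR a) (restR b) * X c₁ (restL b) else 0 := by
    intro c₁
    rw [Finset.sum_eq_single (restR b)]
    · by_cases h : restL a = c₁ <;> simp [h]
    · intro c₂ _ hne
      simp [hne]
    · simp
  simp only [h1]
  rw [Finset.sum_eq_single (restL a)]
  · simp
  · intro c₁ _ hne
    simp [Ne.symm hne]
  · simp

lemma place1_low [Zero R] {n : ℕ} (hn : n < k) (T : Matrix (Fin N) (Fin N) R) :
    (place1 n T : TensM R N (k + l)) = embed (k + l) (place1 n T : TensM R N k) := by
  have hiff : ∀ a b : Fin (k + l) → Fin N,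
      (∀ t : Fin (k + l), t.val ≠ n → a t = b t) ↔
        (restR a = restR b ∧ ∀ s : Fin k, s.val ≠ n → restL a s = restL b s) := by
    intro a b
    constructor
    · intro hfull
      exact ⟨funext fun s => hfull ⟨k + s.val, by omega⟩ (show k + s.val ≠ n by omega),
        fun s hs => hfull ⟨s.val, by omega⟩ hs⟩
    · rintro ⟨h1, h2⟩ t ht
      by_cases htk : t.val < k
      · exact h2 ⟨t.val, htk⟩ ht
      · have h4 := congrFun h1 ⟨t.val - k, by omega⟩
        have h3 : (⟨k + (t.val - k), by omega⟩ : Fin (k + l)) = t :=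
          Fin.ext (show k + (t.val - k) = t.val by omega)
        simpa only [restR, h3] using h4
  ext a b
  rw [embed_apply]
  simp only [place1, Matrix.of_apply]
  rw [dif_pos (show n < k + l by omega), dif_pos hn]
  by_cases hr : restR a = restR b <;>
    by_cases hc : ∀ s : Fin k, s.val ≠ n → restL a s = restL b s
  · rw [if_pos ((hiff a b).2 ⟨hr, hc⟩), if_pos hr, if_pos hc]; rfl
  · rw [if_neg (fun h => hc ((hiff a b).1 h).2), if_pos hr, if_neg hc]
  · rw [if_neg (fun h => hr ((hiff a b).1 h).1), if_neg hr]
  · rw [if_neg (fun h => hr ((hiff a b).1 h).1), if_neg hr]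

lemma place1_high [Zero R] (n : ℕ) (T : Matrix (Fin N) (Fin N) R) :
    (place1 (k + n) T : TensM R N (k + l)) = shiftMat (place1 n T : TensM R N l) := by
  ext a b
  rw [shiftMat_apply]
  simp only [place1, Matrix.of_apply]
  by_cases hn : n < l
  · have hiff : (∀ t : Fin (k + l), t.val ≠ k + n → a t = b t) ↔
        (restL a = restL b ∧ ∀ s : Fin l, s.val ≠ n → restR a s = restR b s) := by
      constructor
      · intro hfull
        exact ⟨funext fun s => hfull ⟨s.val, by omega⟩ (show s.val ≠ k + n by omega),
          fun s hs => hfull ⟨k + s.val, by omega⟩ (show k + s.val ≠ k + n by omega)⟩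
      · rintro ⟨h1, h2⟩ t ht
        by_cases htk : t.val < k
        · have h4 := congrFun h1 ⟨t.val, htk⟩
          simpa only [restL] using h4
        · have h4 := h2 ⟨t.val - k, by omega⟩ (show t.val - k ≠ n by omega)
          have h3 : (⟨k + (t.val - k), by omega⟩ : Fin (k + l)) = t :=
            Fin.ext (show k + (t.val - k) = t.val by omega)
          simpa only [restR, h3] using h4
    rw [dif_pos (show k + n < k + l by omega), dif_pos hn]
    by_cases h1 : restL a = restL b <;>
      by_cases h2 : ∀ s : Fin l, s.val ≠ n → restR a s = restR b s
    · rw [if_pos (hiff.2 ⟨h1, h2⟩), if_pos h1, if_pos h2]; rfl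
    · rw [if_neg (fun h => h2 (hiff.1 h).2), if_pos h1, if_neg h2]
    · rw [if_neg (fun h => h1 (hiff.1 h).1), if_neg h1]
    · rw [if_neg (fun h => h1 (hiff.1 h).1), if_neg h1]
  · rw [dif_neg (show ¬ k + n < k + l by omega), dif_neg hn, ite_self]

lemma place2_high [Zero R] (n : ℕ) (M : RMat R N) :
    (place2 (k + n) M : TensM R N (k + l)) = shiftMat (place2 n M : TensM R N l) := by
  ext a b
  rw [shiftMat_apply]
  simp only [place2, Matrix.of_apply]
  by_cases hn : n + 1 < l
  · have hiff : (∀ t : Fin (k + l), t.val ≠ k + n → t.val ≠ k + n + 1 → a t = b t) ↔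
        (restL a = restL b ∧
          ∀ s : Fin l, s.val ≠ n → s.val ≠ n + 1 → restR a s = restR b s) := by
      constructor
      · intro hfull
        exact ⟨funext fun s => hfull ⟨s.val, by omega⟩ (show s.val ≠ k + n by omega)
            (show s.val ≠ k + n + 1 by omega),
          fun s hs1 hs2 => hfull ⟨k + s.val, by omega⟩ (show k + s.val ≠ k + n by omega)
            (show k + s.val ≠ k + n + 1 by omega)⟩
      · rintro ⟨h1, h2⟩ t ht1 ht2
        by_cases htk : t.val < k
        · have h4 := congrFun h1 ⟨t.val, htk⟩
          simpa only [restL] using h4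
        · have h4 := h2 ⟨t.val - k, by omega⟩ (show t.val - k ≠ n by omega)
            (show t.val - k ≠ n + 1 by omega)
          have h3 : (⟨k + (t.val - k), by omega⟩ : Fin (k + l)) = t :=
            Fin.ext (show k + (t.val - k) = t.val by omega)
          simpa only [restR, h3] using h4
    rw [dif_pos (show k + n + 1 < k + l by omega), dif_pos hn]
    by_cases h1 : restL a = restL b <;>
      by_cases h2 : ∀ s : Fin l, s.val ≠ n → s.val ≠ n + 1 → restR a s = restR b s
    · rw [if_pos (hiff.2 ⟨h1, h2⟩), if_pos h1, if_pos h2]; rfl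
    · rw [if_neg (fun h => h2 (hiff.1 h).2), if_pos h1, if_neg h2]
    · rw [if_neg (fun h => h1 (hiff.1 h).1), if_neg h1]
    · rw [if_neg (fun h => h1 (hiff.1 h).1), if_neg h1]
  · rw [dif_neg (show ¬ k + n + 1 < k + l by omega), dif_neg hn, ite_self]

lemma Tprod_low {𝒜 : Type*} [Ring 𝒜] (T : Matrix (Fin N) (Fin N) 𝒜) :
    ∀ n, n ≤ k → (Tprod (k + l) T n : TensM 𝒜 N (k + l)) = embed (k + l) (Tprod k T n)
  | 0, _ => by
      show (1 : TensM 𝒜 N (k + l)) = embed (k + l) (1 : TensM 𝒜 N k)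
      rw [embed_one]
  | n + 1, h => by
      show Tprod (k + l) T n * place1 n T = embed (k + l) (Tprod k T n * place1 n T)
      rw [Tprod_low T n (by omega), place1_low (show n < k by omega), embed_mul_embed]

lemma Tprod_high {𝒜 : Type*} [Ring 𝒜] (T : Matrix (Fin N) (Fin N) 𝒜) :
    ∀ n, (Tprod (k + l) T (k + n) : TensM 𝒜 N (k + l)) =
      embed (k + l) (Tprod k T k) * shiftMat (Tprod l T n)
  | 0 => by
      show Tprod (k + l) T k = _
      rw [show (Tprod l T 0 : TensM 𝒜 N l) = 1 from rfl, shiftMat_one, mul_one]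
      exact Tprod_low T k le_rfl
  | n + 1 => by
      show Tprod (k + l) T (k + n) * place1 (k + n) T = _
      rw [Tprod_high T n, place1_high, mul_assoc, shiftMat_mul_shiftMat]
      rfl

lemma rChainFrom_shift {F : Type*} [Field F] (Rh : RMat F N) :
    ∀ n, (rChainFrom (k + l) Rh k n : TensM F N (k + l)) = shiftMat (rChainFrom l Rh 0 n)
  | 0 => by
      show (1 : TensM F N (k + l)) = shiftMat (1 : TensM F N l)
      rw [shiftMat_one]
  | n + 1 => by
      show rChainFrom (k + l) Rh k n * place2 (k + n) Rh = _
      rw [rChainFrom_shift Rh n, place2_high, shiftMat_mul_shiftMat]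
      show _ = shiftMat (rChainFrom l Rh 0 n * place2 (0 + n) Rh)
      rw [Nat.zero_add]

lemma lift_embed {F : Type*} [Field F] (𝒜 : Type*) [Ring 𝒜] [Algebra F 𝒜]
    (X : TensM F N k) :
    lift 𝒜 (embed (k + l) X) = embed (k + l) (lift 𝒜 X) := by
  ext a b
  simp only [lift, Matrix.map_apply, embed_apply, apply_ite (algebraMap F 𝒜), map_zero]

lemma lift_shiftMat {F : Type*} [Field F] (𝒜 : Type*) [Ring 𝒜] [Algebra F 𝒜]
    (Y : TensM F N l) :
    lift 𝒜 (shiftMat Y : TensM F N (k + l)) = shiftMat (lift 𝒜 Y) := by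
  ext a b
  simp only [lift, Matrix.map_apply, shiftMat_apply, apply_ite (algebraMap F 𝒜), map_zero]

lemma lift_mul {F : Type*} [Field F] (𝒜 : Type*) [Ring 𝒜] [Algebra F 𝒜] {m : ℕ}
    (X Y : TensM F N m) : lift 𝒜 (X * Y) = lift 𝒜 X * lift 𝒜 Y :=
  Matrix.map_mul

lemma shiftMat_lift_comm {F : Type*} [Field F] (𝒜 : Type*) [Ring 𝒜] [Algebra F 𝒜]
    (Y : TensM F N l) (X : TensM 𝒜 N k) :
    (shiftMat (lift 𝒜 Y) : TensM 𝒜 N (k + l)) * embed (k + l) X =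
      embed (k + l) X * shiftMat (lift 𝒜 Y) := by
  rw [shiftMat_mul_embed, embed_mul_shiftMat]
  ext a b
  simp only [Matrix.of_apply, kron, lift, Matrix.map_apply]
  exact Algebra.commutes _ _

lemma restL_snoc (a : Fin (k + l) → Fin N) (x : Fin N) :
    restL (k := k) (l := l + 1) (Fin.snoc a x) = restL (l := l) a := by
  funext s
  simp only [restL]
  exact @Fin.snoc_castSucc (k + l) (fun _ => Fin N) x a ⟨s.val, by omega⟩

lemma restR_snoc (a : Fin (k + l) → Fin N) (x : Fin N) :
    restR (k := k) (l := l + 1) (Fin.snoc a x) = Fin.snoc (restR (l := l) a) x := by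
  funext s
  refine Fin.lastCases ?_ ?_ s
  · simp only [restR]
    rw [Fin.snoc_last]
    exact @Fin.snoc_last (k + l) (fun _ => Fin N) x a
  · intro i
    simp only [restR]
    rw [Fin.snoc_castSucc]
    exact @Fin.snoc_castSucc (k + l) (fun _ => Fin N) x a ⟨k + i.val, by omega⟩

lemma trAllButLast_kron {𝒜 : Type*} [NonUnitalNonAssocSemiring 𝒜] (X : TensM 𝒜 N k)
    (Y : TensM 𝒜 N (l + 1)) :
    trAllButLast (kron X Y : TensM 𝒜 N (k + (l + 1))) =
      Matrix.of fun x y => Matrix.trace X * trAllButLast Y x y := by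
  ext x y
  show (∑ a : Fin (k + l) → Fin N, kron X Y (Fin.snoc a x) (Fin.snoc a y)) = _
  simp only [kron, Matrix.of_apply, restL_snoc, restR_snoc]
  rw [sum_split]
  rw [show (trAllButLast Y : Matrix (Fin N) (Fin N) 𝒜) x y =
    ∑ c : Fin l → Fin N, Y (Fin.snoc c x) (Fin.snoc c y) from rfl]
  rw [Matrix.trace, Finset.sum_mul_sum]
  simp only [restL_app, restR_app, Matrix.diag]

lemma kron_assemble {F : Type*} [Field F] (𝒜 : Type*) [Ring 𝒜] [Algebra F 𝒜]
    (P : TensM F N l) (A X : TensM 𝒜 N k) (Y : TensM 𝒜 N l) :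
    (embed (k + l) A * shiftMat (lift 𝒜 P)) * (embed (k + l) X * shiftMat Y) =
      kron (A * X) (lift 𝒜 P * Y) := by
  rw [mul_assoc, ← mul_assoc (shiftMat (lift 𝒜 P)), shiftMat_lift_comm, mul_assoc,
    ← mul_assoc, embed_mul_embed, shiftMat_mul_shiftMat, embed_mul_shiftMat]

end CHNaux

theorem CHN_trace_merging {F : Type*} [Field F] {N : ℕ} (hN : 1 ≤ N) (q : F) (hq : q ≠ 0)
    (hqnum : ∀ k : ℕ, 1 ≤ k → qnum q k ≠ 0)
    (Rh : RMat F N) (hRinv : IsUnit Rh.det)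
    (hYB : YangBaxter Rh) (hHecke : Hecke q Rh)
    {𝒜 : Type*} [Ring 𝒜] [Algebra F 𝒜]
    (T : Matrix (Fin N) (Fin N) 𝒜) (hT : RTTrel 𝒜 Rh T)
    (j k : ℕ) (hj : 2 ≤ j) (hk1 : 1 ≤ k) (hkj : k ≤ j - 1) :
    sigmaT 𝒜 Rh q T k • underPow 𝒜 Rh T (j - k) =
      q ^ k •
        trAllButLast
          (lift 𝒜 (embed j (antis Rh q k) * rChainFrom j Rh k (j - 1 - k)) *
            Tprod j T j) := by
  obtain ⟨l, rfl⟩ : ∃ l, j = k + (l + 1) := ⟨j - k - 1, by omega⟩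
  rw [show k + (l + 1) - k = l + 1 by omega, show k + (l + 1) - 1 - k = l by omega]
  have key : lift 𝒜 (embed (k + (l + 1)) (antis Rh q k) * rChainFrom (k + (l + 1)) Rh k l) *
      Tprod (k + (l + 1)) T (k + (l + 1)) =
      kron (lift 𝒜 (antis Rh q k) * Tprod k T k)
        (lift 𝒜 (rChain (l + 1) Rh l) * Tprod (l + 1) T (l + 1)) := by
    rw [lift_mul, lift_embed, rChainFrom_shift (k := k) (l := l + 1) Rh l, lift_shiftMat,
      Tprod_high T (l + 1)]
    rw [show (rChain (l + 1) Rh l : TensM F N (l + 1)) = rChainFrom (l + 1) Rh 0 l from rfl]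
    exact kron_assemble 𝒜 _ _ _ _
  rw [key, trAllButLast_kron]
  rw [show underPow 𝒜 Rh T (l + 1) =
    trAllButLast (lift 𝒜 (rChain (l + 1) Rh l) * Tprod (l + 1) T (l + 1)) from rfl]
  ext x y
  simp only [sigmaT, Matrix.smul_apply, Matrix.of_apply, smul_eq_mul]
  rw [smul_mul_assoc]
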